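/- Let A be a finite alphabet and γ, θ > 0 real weights. Then for all words u, v ∈ A*, lev_{γ,θ}(u, v) = γ · lev_{1, min(θ/γ, 2)}(u, v). In particular, the identity map is a homothety with ratio γ from (A*, lev_{1, min(θ/γ, 2)}) to (A*, lev_{γ,θ}). -/

import Mathlib

/-- The cost structure of the (removed) Mathlib `Levenshtein.Cost`. -/
structure Levenshtein.Cost (α β δ : Type*) where
  delete : α → δ
  insert : β → δ
  substitute : α → β → δ

/-- One step of the dynamic programming computation of the (removed) Mathlib `levenshtein`. -/
def Levenshtein.impl {α β δ : Type*} [AddZeroClass δ] [Min δ] (C : Levenshtein.Cost α β δ)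
    (xs : List α) (y : β) (d : {r : List δ // 0 < r.length}) : {r : List δ // 0 < r.length} :=
  let ⟨ds, w⟩ := d
  xs.zip (ds.zip ds.tail) |>.foldr
    (init := ⟨[C.insert y + ds.getLast (List.ne_nil_of_length_pos w)], by simp⟩)
    (fun ⟨x, d₀, d₁⟩ ⟨r, w⟩ =>
      ⟨min (C.delete x + r[0]) (min (C.insert y + d₀) (C.substitute x y + d₁)) :: r, by simp⟩)

/-- Suffix Levenshtein distances, as in the (removed) Mathlib `suffixLevenshtein`. -/
def suffixLevenshtein {α β δ : Type*} [AddZeroClass δ] [Min δ] (C : Levenshtein.Cost α β δ)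
    (xs : List α) (ys : List β) : {r : List δ // 0 < r.length} :=
  ys.foldr
    (Levenshtein.impl C xs)
    (xs.foldr (init := ⟨[0], by simp⟩) (fun a ⟨r, w⟩ => ⟨(C.delete a + r[0]) :: r, by simp⟩))

/-- The Levenshtein distance, as in the (removed) Mathlib `levenshtein`. -/
def levenshtein {α β δ : Type*} [AddZeroClass δ] [Min δ] (C : Levenshtein.Cost α β δ)
    (xs : List α) (ys : List β) : δ :=
  let ⟨r, w⟩ := suffixLevenshtein C xs ys
  r[0]

/-- Cost structure for the generalized Levenshtein distance:
insertions and deletions cost `γ`, substitutions cost `θ`. -/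
def levCost (A : Type*) [DecidableEq A] (γ θ : ℝ) : Levenshtein.Cost A A ℝ where
  delete _ := γ
  insert _ := γ
  substitute a b := if a = b then 0 else θ

/-- The generalized Levenshtein distance `lev_{γ,θ}` between two words over `A`:
the minimal total cost of transforming one word into the other by insertions and
deletions (of cost `γ`) and substitutions (of cost `θ`). -/
def lev {A : Type*} [DecidableEq A] (γ θ : ℝ) (u v : List A) : ℝ :=
  levenshtein (levCost A γ θ) u v

/-- The isometry group of a language `L ⊆ A*` with respect to a distance `d` on `A*`:
the group (under composition) of bijections of `L` preserving `d`. -/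
def IsomGroup {A : Type*} (d : List A → List A → ℝ) (L : Set (List A)) :
    Subgroup (Equiv.Perm L) where
  carrier := {φ : Equiv.Perm L | ∀ u v : L, d (φ u) (φ v) = d u v}
  one_mem' := by intro u v; rfl
  mul_mem' := by intro φ ψ hφ hψ u v; simp only [Equiv.Perm.mul_apply]; rw [hφ, hψ]
  inv_mem' := by
    intro φ hφ u v
    have h := hφ (φ⁻¹ u) (φ⁻¹ v)
    simpa using h.symm

/-! Replacing the substitution cost `θ` by `min θ (2γ)` does not change `lev γ θ`, because a
substitution costing at least `2γ` is never cheaper than a deletion followed by an insertion.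
The Wagner–Fischer recursion is positively homogeneous in the costs, so scaling all costs by
`γ > 0` scales the distance by `γ`; hence `lev γ θ = lev γ (min θ (2γ)) = γ * lev 1 (min (θ/γ) 2)`.
-/

namespace Levenshtein

variable {α β δ : Type*} [AddZeroClass δ] [Min δ] {C : Cost α β δ}

theorem impl_cons {x : α} {xs : List α} {y : β} {d : δ} {ds : List δ}
    (w : 0 < (d :: ds).length) (w' : 0 < ds.length) :
    impl C (x :: xs) y ⟨d :: ds, w⟩ =
      let ⟨r, w⟩ := impl C xs y ⟨ds, w'⟩
      ⟨min (C.delete x + r[0]) (min (C.insert y + d) (C.substitute x y + ds[0])) :: r, by simp⟩ :=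
  match ds, w' with | _ :: _, _ => rfl

theorem impl_length {xs : List α} {y : β} (d : {r : List δ // 0 < r.length})
    (w : d.1.length = xs.length + 1) :
    (impl C xs y d).1.length = xs.length + 1 := by
  induction xs generalizing d with
  | nil => rfl
  | cons x xs ih =>
    match d, w with
    | ⟨_ :: _ :: _, _⟩, w =>
      dsimp [impl]
      congr 1
      exact ih ⟨_ :: _, Nat.zero_lt_succ _⟩ (by simpa using w)

end Levenshtein

open Levenshtein

section Recursion

variable {α β δ : Type*} [AddZeroClass δ] [Min δ] (C : Cost α β δ)

@[simp]
theorem suffixLevenshtein_length (xs : List α) (ys : List β) :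
    (suffixLevenshtein C xs ys).1.length = xs.length + 1 := by
  induction ys with
  | nil =>
    induction xs with
    | nil => rfl
    | cons _ xs ih => simp_all [suffixLevenshtein]
  | cons y ys ih => exact impl_length _ ih

theorem suffixLevenshtein_cons₂ (xs : List α) (y : β) (ys : List β) :
    suffixLevenshtein C xs (y :: ys) = impl C xs y (suffixLevenshtein C xs ys) :=
  rfl

theorem suffixLevenshtein_cons₁ (x : α) (xs : List α) (ys : List β) :
    suffixLevenshtein C (x :: xs) ys =
      ⟨levenshtein C (x :: xs) ys :: (suffixLevenshtein C xs ys).1, by simp⟩ := by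
  induction ys with
  | nil => rfl
  | cons y ys ih =>
    apply Subtype.ext
    have hne := List.ne_nil_of_length_pos (suffixLevenshtein C (x :: xs) (y :: ys)).2
    rw [← List.cons_head_tail hne]
    congr 1
    · rw [List.head_eq_getElem]
      rfl
    · rw [suffixLevenshtein_cons₂, ih, impl_cons _ (by simp)]
      rfl

theorem levenshtein_nil_nil : levenshtein C [] [] = 0 :=
  rfl

theorem levenshtein_nil_cons (y : β) (ys : List β) :
    levenshtein C [] (y :: ys) = C.insert y + levenshtein C [] ys := by
  have h := suffixLevenshtein_length C [] ys
  unfold levenshtein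
  rw [suffixLevenshtein_cons₂]
  revert h
  obtain ⟨_ | ⟨a, _ | ⟨b, l⟩⟩, w⟩ := suffixLevenshtein C [] ys
  · simp at w
  · intro; rfl
  · simp

theorem levenshtein_cons_nil (x : α) (xs : List α) :
    levenshtein C (x :: xs) [] = C.delete x + levenshtein C xs [] :=
  rfl

theorem levenshtein_cons_cons (x : α) (xs : List α) (y : β) (ys : List β) :
    levenshtein C (x :: xs) (y :: ys) =
      min (C.delete x + levenshtein C xs (y :: ys))
        (min (C.insert y + levenshtein C (x :: xs) ys)
          (C.substitute x y + levenshtein C xs ys)) := by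
  conv_lhs => unfold levenshtein; rw [suffixLevenshtein_cons₂, suffixLevenshtein_cons₁]
  rw [impl_cons _ (by simp)]
  rfl

end Recursion

theorem levenshtein_cons_right_le {α β δ : Type*} [AddZeroClass δ] [LinearOrder δ]
    (C : Cost α β δ) (xs : List α) (y : β) (ys : List β) :
    levenshtein C xs (y :: ys) ≤ C.insert y + levenshtein C xs ys := by
  cases xs with
  | nil => exact (levenshtein_nil_cons C y ys).le
  | cons x xs =>
    rw [levenshtein_cons_cons]
    exact (min_le_right _ _).trans (min_le_left _ _)

theorem levenshtein_eq_mul {α β : Type*} {C C' : Cost α β ℝ} {c : ℝ} (hc : 0 ≤ c)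
    (hdelete : ∀ x, C'.delete x = c * C.delete x) (hinsert : ∀ y, C'.insert y = c * C.insert y)
    (hsubstitute : ∀ x y, C'.substitute x y = c * C.substitute x y) (xs : List α) (ys : List β) :
    levenshtein C' xs ys = c * levenshtein C xs ys := by
  induction xs generalizing ys with
  | nil =>
    induction ys with
    | nil => rw [levenshtein_nil_nil, levenshtein_nil_nil, mul_zero]
    | cons y ys ih => rw [levenshtein_nil_cons, levenshtein_nil_cons, ih, hinsert, mul_add]
  | cons x xs ihx =>
    induction ys with
    | nil => rw [levenshtein_cons_nil, levenshtein_cons_nil, ihx, hdelete, mul_add]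
    | cons y ys ihy =>
      simp only [levenshtein_cons_cons, ihx, ihy, hdelete, hinsert, hsubstitute,
        mul_min_of_nonneg _ _ hc, mul_add]

theorem lev_mul {A : Type*} [DecidableEq A] {c : ℝ} (hc : 0 ≤ c) (γ θ : ℝ) (u v : List A) :
    lev (c * γ) (c * θ) u v = c * lev γ θ u v :=
  levenshtein_eq_mul hc (fun _ ↦ rfl) (fun _ ↦ rfl)
    (fun x y ↦ by by_cases h : x = y <;> simp [levCost, h]) u v

theorem lev_min_two_mul {A : Type*} [DecidableEq A] (γ θ : ℝ) (u v : List A) :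
    lev γ (min θ (2 * γ)) u v = lev γ θ u v := by
  induction u generalizing v with
  | nil => rfl
  | cons x xs ihx =>
    induction v with
    | nil => rfl
    | cons y ys ihy =>
      simp only [lev] at ihx ihy ⊢
      have hins := levenshtein_cons_right_le (levCost A γ θ) xs y ys
      rw [levenshtein_cons_cons, levenshtein_cons_cons, ihx, ihx, ihy]
      generalize levenshtein (levCost A γ θ) xs (y :: ys) = L₁ at hins ⊢
      generalize levenshtein (levCost A γ θ) (x :: xs) ys = L₂
      generalize levenshtein (levCost A γ θ) xs ys = L₃ at hins ⊢
      by_cases hxy : x = y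
      · simp only [levCost, hxy, if_true]
      simp only [levCost, hxy, if_false] at hins ⊢
      rcases le_total θ (2 * γ) with h | h
      · rw [min_eq_left h]
      have hsub : ∀ c, γ + L₁ ≤ c → min (γ + L₁) (min (γ + L₂) c) = min (γ + L₁) (γ + L₂) :=
        fun c hc ↦ by rw [min_left_comm, min_eq_left hc, min_comm]
      rw [min_eq_right h, hsub _ (by linarith), hsub _ (by linarith)]

theorem stmt_2_general {A : Type*} [DecidableEq A] (γ θ : ℝ)
    (hγ : 0 < γ) (u v : List A) :
    lev γ θ u v = γ * lev 1 (min (θ / γ) 2) u v := by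
  have hcost : γ * min (θ / γ) 2 = min θ (2 * γ) := by
    rw [mul_min_of_nonneg _ _ hγ.le, mul_div_cancel₀ _ hγ.ne', mul_comm]
  rw [← lev_mul hγ.le, mul_one, hcost, lev_min_two_mul]

/-- For any weights `γ, θ > 0`,
`lev_{γ,θ}(u, v) = γ · lev_{1, min(θ/γ, 2)}(u, v)` for all words `u, v`; i.e. the identity
map is a homothety with ratio `γ` from `(A*, lev_{1, min(θ/γ, 2)})` to `(A*, lev_{γ,θ})`. -/
theorem stmt_2 {A : Type*} [Fintype A] [DecidableEq A] (γ θ : ℝ)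
    (hγ : 0 < γ) (hθ : 0 < θ) (u v : List A) :
    lev γ θ u v = γ * lev 1 (min (θ / γ) 2) u v :=
  stmt_2_general γ θ hγ u v
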